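/- arXiv:math/0406325 — 7 statements merged into one kernel-verified Lean document; each statement's English description precedes it below -/
import Mathlib

section
/- Let A be a complex vector space of dimension at least 2, and let f, g : A → ℂ be linear functions. The product x*y = f(y)x + g(x)y defines a left-symmetric algebra on A if and only if f = 0 or g = 0. -/
/-!
For `x * y = f(y) x + g(x) y` the associator is `(x, y, z) = f(y) g(x) z - g(y) f(z) x`, which
vanishes identically when `f = 0` or `g = 0`. Conversely, if `f, g ≠ 0` then some `a` has
`f a ≠ 0` and `g a ≠ 0`, and left symmetry for the triple `(a, b, a)` reads
`f(a) g(a) b = (2 f(a) g(b) - f(b) g(a)) a`, so every `b` is a multiple of `a` and `dim A ≤ 1`.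
-/

section

variable {R K A : Type*} [AddCommGroup A]

def IsLeftSymmetric (mul : A → A → A) : Prop :=
  ∀ x y z : A, mul (mul x y) z - mul x (mul y z) = mul (mul y x) z - mul y (mul x z)

theorem IsLeftSymmetric.of_assoc {mul : A → A → A}
    (h : ∀ x y z : A, mul (mul x y) z = mul x (mul y z)) : IsLeftSymmetric mul := by
  intro x y z
  rw [h, h, sub_self, sub_self]

section CommRing

variable [CommRing R] [Module R A]

def formMul (f g : A →ₗ[R] R) (x y : A) : A := f y • x + g x • y

theorem formMul_associator (f g : A →ₗ[R] R) (x y z : A) :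
    formMul f g (formMul f g x y) z - formMul f g x (formMul f g y z) =
      (f y * g x) • z - (g y * f z) • x := by
  simp only [formMul, map_add, map_smul, smul_eq_mul]
  module

theorem formMul_assoc {f g : A →ₗ[R] R} (hfg : f = 0 ∨ g = 0) (x y z : A) :
    formMul f g (formMul f g x y) z = formMul f g x (formMul f g y z) := by
  rw [← sub_eq_zero, formMul_associator]
  rcases hfg with rfl | rfl <;> simp

end CommRing

theorem exists_smul_eq_of_isLeftSymmetric [Field K] [Module K A] {f g : A →ₗ[K] K}
    (h : IsLeftSymmetric (formMul f g)) {a : A} (hfa : f a ≠ 0) (hga : g a ≠ 0) (b : A) :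
    ∃ c : K, c • a = b := by
  have hab := h a b a
  rw [formMul_associator, formMul_associator] at hab
  refine ⟨(f a * g a)⁻¹ * (2 * f a * g b - f b * g a), ?_⟩
  rw [mul_smul, inv_smul_eq_iff₀ (mul_ne_zero hfa hga)]
  linear_combination (norm := module) -hab

end

theorem LinearMap.exists_apply_ne_zero_and_apply_ne_zero {R M : Type*} [Semiring R]
    [AddCommMonoid M] [Module R M] {f g : M →ₗ[R] R} (hf : f ≠ 0) (hg : g ≠ 0) :
    ∃ a, f a ≠ 0 ∧ g a ≠ 0 := by
  obtain ⟨x, hfx⟩ := DFunLike.ne_iff.mp hf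
  obtain ⟨y, hgy⟩ := DFunLike.ne_iff.mp hg
  by_cases hgx : g x = 0
  · by_cases hfy : f y = 0
    · exact ⟨x + y, by simpa [hfy] using hfx, by simpa [hgx] using hgy⟩
    · exact ⟨y, hfy, hgy⟩
  · exact ⟨x, hfx, hgx⟩

theorem stmt_0_general (A : Type*) [AddCommGroup A] [Module ℂ A]
    (hdim : 2 ≤ Module.finrank ℂ A) (f g : A →ₗ[ℂ] ℂ)
    (mul : A → A → A) (hmul : ∀ x y, mul x y = f y • x + g x • y) :
    (∀ x y z : A,
      mul (mul x y) z - mul x (mul y z) = mul (mul y x) z - mul y (mul x z)) ↔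
      (f = 0 ∨ g = 0) := by
  obtain rfl : mul = formMul f g := funext₂ hmul
  refine ⟨fun h => ?_, fun hfg => IsLeftSymmetric.of_assoc (formMul_assoc hfg)⟩
  by_contra! hfg
  obtain ⟨a, hfa, hga⟩ := LinearMap.exists_apply_ne_zero_and_apply_ne_zero hfg.1 hfg.2
  have := finrank_le_one a (exists_smul_eq_of_isLeftSymmetric h hfa hga)
  omega

theorem stmt_0 (A : Type*) [AddCommGroup A] [Module ℂ A] [FiniteDimensional ℂ A]
    (hdim : 2 ≤ Module.finrank ℂ A) (f g : A →ₗ[ℂ] ℂ)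
    (mul : A → A → A) (hmul : ∀ x y, mul x y = f y • x + g x • y) :
    (∀ x y z : A,
      mul (mul x y) z - mul x (mul y z) = mul (mul y x) z - mul y (mul x z)) ↔
      (f = 0 ∨ g = 0) :=
  stmt_0_general A hdim f g mul hmul
end

section
/- Let A be a complex vector space of dimension n ≥ 2, c ∈ A nonzero, h a nonzero symmetric bilinear form, and define f(x) = h(x,c) and x*y = f(x)y + h(x,y)c. Then A is a left-symmetric algebra, and h is invariant in the sense that h(x*y, z) = h(x, z*y) for all x,y,z ∈ A. -/
/-!
Both identities are polynomial identities in the scalars `h(u, v)`: expanding `x * y = h(x,c) y + h(x,y) c`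
and using the symmetry of `h`, the associator `(x*y)*z - x*(y*z)` becomes symmetric in `x, y`, and both sides
of the invariance identity become `h(x,c) h(y,z) + h(x,y) h(c,z)`.
-/

namespace LinearMap

variable {R M : Type*} [CommRing R] [AddCommGroup M] [Module R M]

def formMul (h : M →ₗ[R] M →ₗ[R] R) (c x y : M) : M :=
  h x c • y + h x y • c

variable (h : M →ₗ[R] M →ₗ[R] R) (c : M)

theorem formMul_associator_comm (hsymm : ∀ x y, h x y = h y x) (x y z : M) :
    formMul h c (formMul h c x y) z - formMul h c x (formMul h c y z) =
      formMul h c (formMul h c y x) z - formMul h c y (formMul h c x z) := by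
  simp only [formMul, map_add, map_smul, add_apply, smul_apply, smul_eq_mul, smul_add, smul_smul]
  rw [hsymm x y]
  module

theorem formMul_invariant (hsymm : ∀ x y, h x y = h y x) (x y z : M) :
    h (formMul h c x y) z = h x (formMul h c z y) := by
  simp only [formMul, map_add, map_smul, add_apply, smul_apply, smul_eq_mul]
  rw [hsymm c z, hsymm y z]
  ring

end LinearMap

theorem stmt_10_general (A : Type*) [AddCommGroup A] [Module ℂ A]
    (c : A)
    (h : A →ₗ[ℂ] A →ₗ[ℂ] ℂ) (hsymm : ∀ x y, h x y = h y x)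
    (mul : A → A → A) (hmul : ∀ x y, mul x y = h x c • y + h x y • c) :
    (∀ x y z : A,
      mul (mul x y) z - mul x (mul y z) = mul (mul y x) z - mul y (mul x z)) ∧
    (∀ x y z : A, h (mul x y) z = h x (mul z y)) := by
  obtain rfl : mul = LinearMap.formMul h c := funext₂ hmul
  exact ⟨LinearMap.formMul_associator_comm h c hsymm, LinearMap.formMul_invariant h c hsymm⟩

theorem stmt_10 (A : Type*) [AddCommGroup A] [Module ℂ A] [FiniteDimensional ℂ A]
    (hdim : 2 ≤ Module.finrank ℂ A)
    (c : A) (hc : c ≠ 0)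
    (h : A →ₗ[ℂ] A →ₗ[ℂ] ℂ) (hne : h ≠ 0) (hsymm : ∀ x y, h x y = h y x)
    (mul : A → A → A) (hmul : ∀ x y, mul x y = h x c • y + h x y • c) :
    (∀ x y z : A,
      mul (mul x y) z - mul x (mul y z) = mul (mul y x) z - mul y (mul x z)) ∧
    (∀ x y z : A, h (mul x y) z = h x (mul z y)) :=
  stmt_10_general A c h hsymm mul hmul
end

section
/- Let A be a complex vector space of dimension n ≥ 2, c ∈ A nonzero with h(c,c) = 0, h a nonzero symmetric bilinear form, g(x) = −h(x,c), and define x*y = g(y)x + h(x,y)c. Then A is a left-symmetric algebra and h satisfies h(x*y, z) + h(y, x*z) = 0 for all x,y,z ∈ A. -/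
/-!
Expanding the product, the associator `(x*y)*z - x*(y*z)` is the multiple
`(h(x,y) h(c,z) - h(y,c) h(x,z) - h(y,z) h(x,c)) • c` of `c`: its `x`-component is
`h(z,c) h(y,c) - h(z,c) h(y,c) + h(y,z) h(c,c)`, which vanishes because `h(c,c) = 0`. The coefficient
is symmetric in `x, y` as `h` is, so the algebra is left-symmetric. Skew-adjointness of `L_x` is a
similar expansion in which the terms cancel in pairs by symmetry of `h`.
-/

namespace IsotropicVectorMul

variable {R A : Type*} [CommRing R] [AddCommGroup A] [Module R A]
  (h : A →ₗ[R] A →ₗ[R] R) (c : A)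

def mul (x y : A) : A := (-(h y c)) • x + h x y • c

theorem h_mul_left (x y z : A) : h (mul h c x y) z = -(h y c * h x z) + h x y * h c z := by
  simp [mul]

theorem h_mul_right (x y z : A) : h x (mul h c y z) = -(h z c * h x y) + h y z * h x c := by
  simp [mul]

theorem mul_mul_sub_mul_mul (hcc : h c c = 0) (x y z : A) :
    mul h c (mul h c x y) z - mul h c x (mul h c y z)
      = (h x y * h c z - h y c * h x z - h y z * h x c) • c := by
  have hc : h (mul h c y z) c = -(h z c * h y c) := by
    rw [h_mul_left, hcc, mul_zero, add_zero]
  rw [mul.eq_1 h c (mul h c x y), mul.eq_1 h c x (mul h c y z), h_mul_left, h_mul_right, hc]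
  simp only [mul]
  module

theorem mul_mul_sub_mul_mul_comm (hcc : h c c = 0) (hsymm : ∀ x y, h x y = h y x) (x y z : A) :
    mul h c (mul h c x y) z - mul h c x (mul h c y z)
      = mul h c (mul h c y x) z - mul h c y (mul h c x z) := by
  rw [mul_mul_sub_mul_mul h c hcc, mul_mul_sub_mul_mul h c hcc, hsymm y x]
  congr 1
  ring

theorem h_mul_add_h_mul (hsymm : ∀ x y, h x y = h y x) (x y z : A) :
    h (mul h c x y) z + h y (mul h c x z) = 0 := by
  rw [h_mul_left, h_mul_right, hsymm z c, hsymm y x]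
  ring

end IsotropicVectorMul

theorem stmt_11_general (A : Type*) [AddCommGroup A] [Module ℂ A]
    (c : A)
    (h : A →ₗ[ℂ] A →ₗ[ℂ] ℂ) (hsymm : ∀ x y, h x y = h y x)
    (hcc : h c c = 0)
    (mul : A → A → A) (hmul : ∀ x y, mul x y = (-(h y c)) • x + h x y • c) :
    (∀ x y z : A,
      mul (mul x y) z - mul x (mul y z) = mul (mul y x) z - mul y (mul x z)) ∧
    (∀ x y z : A, h (mul x y) z + h y (mul x z) = 0) := by
  obtain rfl : mul = IsotropicVectorMul.mul h c := funext₂ hmul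
  exact ⟨IsotropicVectorMul.mul_mul_sub_mul_mul_comm h c hcc hsymm,
    IsotropicVectorMul.h_mul_add_h_mul h c hsymm⟩

theorem stmt_11 (A : Type*) [AddCommGroup A] [Module ℂ A] [FiniteDimensional ℂ A]
    (hdim : 2 ≤ Module.finrank ℂ A)
    (c : A) (hc : c ≠ 0)
    (h : A →ₗ[ℂ] A →ₗ[ℂ] ℂ) (hne : h ≠ 0) (hsymm : ∀ x y, h x y = h y x)
    (hcc : h c c = 0)
    (mul : A → A → A) (hmul : ∀ x y, mul x y = (-(h y c)) • x + h x y • c) :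
    (∀ x y z : A,
      mul (mul x y) z - mul x (mul y z) = mul (mul y x) z - mul y (mul x z)) ∧
    (∀ x y z : A, h (mul x y) z + h y (mul x z) = 0) :=
  stmt_11_general A c h hsymm hcc mul hmul
end

section
/- Let V be a complex vector space with a symmetric bilinear form (,) and a a fixed vector with (a,a) ≠ 0. The left-symmetric algebra defined by u*v = (u,v)a + (u,a)v is isomorphic to the algebra with basis e₁,…,eₙ and products e₁e₁ = 2e₁, e₁e_j = e_j, e_je_j = e₁ for j = 2,…,n (all other products zero), provided (,) is non-degenerate. -/
open Module LinearMap

theorem stmt_13 (V : Type*) [AddCommGroup V] [Module ℂ V] [FiniteDimensional ℂ V]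
    (n : ℕ) [NeZero n] (hn : 2 ≤ n) (hdim : Module.finrank ℂ V = n)
    (B : V →ₗ[ℂ] V →ₗ[ℂ] ℂ) (hsymm : ∀ u v, B u v = B v u)
    (hnd : ∀ u : V, (∀ v : V, B u v = 0) → u = 0)
    (a : V) (ha : B a a ≠ 0)
    (mul : V → V → V) (hmul : ∀ u v, mul u v = B u v • a + B u a • v)
    (modelMul : (Fin n → ℂ) → (Fin n → ℂ) → (Fin n → ℂ))
    (hmodel : ∀ x y, modelMul x y = fun i =>
      if i = 0 then (∑ j, x j * y j) + x 0 * y 0 else x 0 * y i) :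
    ∃ φ : V ≃ₗ[ℂ] (Fin n → ℂ), ∀ u v : V, φ (mul u v) = modelMul (φ u) (φ v) := by
  classical
  have hBsymm : B.IsSymm := ⟨fun u v => hsymm u v⟩
  have hBrefl : B.IsRefl := hBsymm.isRefl
  have hBnd : LinearMap.BilinForm.Nondegenerate B :=
    ⟨fun u hu => hnd u hu, fun u hu => hnd u fun v => by rw [hsymm]; exact hu v⟩
  have hx : ¬ LinearMap.BilinForm.IsOrtho B a a := ha
  obtain ⟨c, hc⟩ : ∃ c : ℂ, c ^ 2 = B a a := IsAlgClosed.exists_pow_nat_eq (B a a) zero_lt_two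
  have hc0 : c ≠ 0 := by
    intro h; rw [h] at hc; simp at hc; exact ha hc.symm
  set W : Submodule ℂ V := LinearMap.BilinForm.orthogonal B (ℂ ∙ a) with hW
  have hWnd : (LinearMap.BilinForm.restrict B W).Nondegenerate :=
    LinearMap.BilinForm.restrict_nondegenerate_orthogonal_spanSingleton B hBnd hBrefl hx
  have hWsymm : (LinearMap.BilinForm.restrict B W).IsSymm := by
    constructor
    intro x y
    simp only [LinearMap.BilinForm.restrict_apply, RingHom.id_apply]
    exact hsymm _ _
  obtain ⟨v, hv⟩ := LinearMap.BilinForm.exists_orthogonal_basis (B := LinearMap.BilinForm.restrict B W)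
    ⟨fun x y => hsymm _ _⟩
  -- members of W are orthogonal to a
  have hWa : ∀ x : W, B a (x : V) = 0 := by
    intro x
    exact x.2 a (Submodule.mem_span_singleton_self a)
  have haW : ∀ x : W, B (x : V) a = 0 := fun x => by rw [hsymm]; exact hWa x
  -- diagonal entries nonzero
  have hdiag : ∀ i, B (v i : V) (v i : V) ≠ 0 := by
    intro i
    have := LinearMap.BilinForm.iIsOrtho.not_isOrtho_basis_self_of_nondegenerate hv hWnd i
    simpa [LinearMap.BilinForm.IsOrtho, LinearMap.BilinForm.restrict_apply] using this
  -- choose normalizing scalars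
  choose s hs using fun i => IsAlgClosed.exists_pow_nat_eq (k := ℂ) (B (v i : V) (v i : V)) zero_lt_two
  have hs0 : ∀ i, s i ≠ 0 := by
    intro i h
    have := hs i
    rw [h] at this
    simp at this
    exact hdiag i this.symm
  -- dimension of W
  have hrank : 1 + finrank ℂ W = n := by
    have h1 : finrank ℂ (ℂ ∙ a) = 1 := by
      apply finrank_span_singleton
      intro h
      apply ha
      rw [h]; simp
    have := Submodule.finrank_add_eq_of_isCompl
      (LinearMap.BilinForm.isCompl_span_singleton_orthogonal hx)
    rw [h1, hdim] at this
    exact this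
  -- the orthonormal family
  set b : Fin n → V := fun i =>
    if h : (i : ℕ) = 0 then c⁻¹ • a else (s ⟨(i : ℕ) - 1, by omega⟩)⁻¹ • (v ⟨(i : ℕ) - 1, by omega⟩ : V)
    with hbdef
  have hb0 : b 0 = c⁻¹ • a := by simp [hbdef]
  have hbne : ∀ i : Fin n, (i : ℕ) ≠ 0 →
      b i = (s ⟨(i : ℕ) - 1, by omega⟩)⁻¹ • (v ⟨(i : ℕ) - 1, by omega⟩ : V) := by
    intro i hi; simp only [hbdef, dif_neg hi]
  have hortho : ∀ i j : Fin n, B (b i) (b j) = if i = j then 1 else 0 := by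
    intro i j
    by_cases hi : (i : ℕ) = 0 <;> by_cases hj : (j : ℕ) = 0
    · have hij : i = j := by ext; omega
      have : b i = c⁻¹ • a := by rw [show i = 0 by ext; simpa using hi, hb0]
      rw [hij] at this ⊢
      rw [this]
      simp only [map_smul, LinearMap.smul_apply, smul_eq_mul, if_pos rfl]
      field_simp [← hc]
      simp [hc]
    · have hij : i ≠ j := fun h => hj (h ▸ hi)
      rw [show b i = c⁻¹ • a by rw [show i = 0 by ext; simpa using hi, hb0], hbne j hj,
        if_neg hij]
      simp only [map_smul, LinearMap.smul_apply, smul_eq_mul]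
      rw [hWa]
      ring
    · have hij : i ≠ j := fun h => hi (h ▸ hj)
      rw [show b j = c⁻¹ • a by rw [show j = 0 by ext; simpa using hj, hb0], hbne i hi,
        if_neg hij]
      simp only [map_smul, LinearMap.smul_apply, smul_eq_mul]
      rw [haW]
      ring
    · rw [hbne i hi, hbne j hj]
      simp only [map_smul, LinearMap.smul_apply, smul_eq_mul]
      by_cases hij : i = j
      · subst hij
        rw [if_pos rfl]
        have h2 := hs ⟨(i : ℕ) - 1, by omega⟩
        rw [← h2, pow_two, inv_mul_cancel_left₀ (hs0 _), inv_mul_cancel₀ (hs0 _)]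
      · rw [if_neg hij]
        have hne : (⟨(i : ℕ) - 1, by omega⟩ : Fin (finrank ℂ W)) ≠ ⟨(j : ℕ) - 1, by omega⟩ := by
          intro h
          apply hij
          have := congrArg Fin.val h
          simp at this
          ext; omega
        have h0 : B (v ⟨(i : ℕ) - 1, by omega⟩ : V) (v ⟨(j : ℕ) - 1, by omega⟩ : V) = 0 := by
          have h1 := hv hne
          simpa [Function.onFun, LinearMap.IsOrtho, LinearMap.BilinForm.restrict_apply] using h1
        rw [h0]
        ring
  -- linear independence
  have hli : LinearIndependent ℂ b := by
    apply LinearMap.BilinForm.linearIndependent_of_iIsOrtho (B := B)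
    · intro i j hij
      have := hortho i j
      rwa [if_neg hij] at this
    · intro i h
      have := hortho i i
      rw [if_pos rfl] at this
      rw [h] at this
      exact one_ne_zero this.symm
  have hcard : Fintype.card (Fin n) = finrank ℂ V := by simp [hdim]
  have : Nonempty (Fin n) := ⟨0⟩
  set bb : Basis (Fin n) ℂ V := basisOfLinearIndependentOfCardEqFinrank hli hcard with hbb
  have hbbeq : ∀ i, bb i = b i := fun i => by
    rw [hbb, coe_basisOfLinearIndependentOfCardEqFinrank]
  -- key: B u (bb j) = repr u j
  have key1 : ∀ (u : V) (j : Fin n), B u (bb j) = bb.repr u j := by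
    intro u j
    conv_lhs => rw [← bb.sum_repr u]
    rw [map_sum, LinearMap.sum_apply]
    rw [Finset.sum_eq_single j]
    · simp only [map_smul, LinearMap.smul_apply, smul_eq_mul]
      simp only [hbbeq]
      rw [hortho, if_pos rfl, mul_one]
    · intro i _ hij
      simp only [map_smul, LinearMap.smul_apply, smul_eq_mul]
      simp only [hbbeq]
      rw [hortho, if_neg hij, mul_zero]
    · intro h; exact absurd (Finset.mem_univ j) h
  have key2 : ∀ u w : V, B u w = ∑ j, bb.repr u j * bb.repr w j := by
    intro u w
    conv_lhs => rw [← bb.sum_repr w]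
    rw [map_sum]
    apply Finset.sum_congr rfl
    intro j _
    rw [map_smul, smul_eq_mul, key1]
    ring
  -- the isomorphism
  refine ⟨bb.equivFun ≪≫ₗ LinearEquiv.smulOfNeZero ℂ (Fin n → ℂ) c hc0, ?_⟩
  intro u w
  set φ : V ≃ₗ[ℂ] (Fin n → ℂ) := bb.equivFun ≪≫ₗ LinearEquiv.smulOfNeZero ℂ (Fin n → ℂ) c hc0 with hφ
  have hφap : ∀ (z : V) (i : Fin n), φ z i = c * bb.repr z i := by
    intro z i
    simp [hφ, LinearEquiv.smulOfNeZero, LinearEquiv.smulOfUnit, Units.smul_def,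
      Basis.equivFun_apply, DistribMulAction.toLinearEquiv,
      DistribMulAction.toLinearMap, Units.mk0, Pi.smul_apply, smul_eq_mul]
  -- repr of a
  have hab : a = c • bb 0 := by
    rw [hbbeq, hb0, smul_smul, mul_inv_cancel₀ hc0, one_smul]
  have hrepra : ∀ i, bb.repr a i = if i = 0 then c else 0 := by
    intro i
    by_cases h : i = 0
    · subst h; simp [hab]
    · simp [hab, Finsupp.single_apply, h, Ne.symm h]
  have hua : ∀ z : V, B z a = φ z 0 := by
    intro z
    rw [hab, map_smul, smul_eq_mul, key1, hφap]
  -- finish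
  rw [hmodel]
  funext i
  have hlhs : φ (mul u w) i = B u w * (c * bb.repr a i) + B u a * φ w i := by
    rw [hmul, hφap, map_add, map_smul, map_smul]
    simp only [Finsupp.coe_add, Finsupp.coe_smul, Pi.add_apply, Pi.smul_apply, smul_eq_mul]
    rw [hφap]
    ring
  rw [hlhs]
  by_cases h : i = 0
  · subst h
    rw [if_pos rfl, hrepra, if_pos rfl]
    have hsum : ∑ j, φ u j * φ w j = c ^ 2 * B u w := by
      rw [key2]
      rw [Finset.mul_sum]
      apply Finset.sum_congr rfl
      intro j _
      rw [hφap, hφap]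
      ring
    rw [hsum, hua u]
    ring
  · rw [if_neg h, hrepra, if_neg h, hua u, hφap w]
    ring
end

section
/- The n-dimensional complex algebra A with basis e₁,…,eₙ and nonzero products e₁e₁ = 2e₁, e₁e_j = e_j, e_je_j = e₁ (j = 2,…,n) is a simple left-symmetric algebra: it has no two-sided ideals other than 0 and A. -/
/-!
Writing `e = e₁` and `⟨x, y⟩ = ∑ xⱼ yⱼ`, the product is `x y = x₁ y + ⟨x, y⟩ e`. From this,
`(x y) z - x (y z) = ⟨x, y⟩ z + (⟨x, y⟩ z₁ - y₁ ⟨x, z⟩ - x₁ ⟨y, z⟩) e`, which is symmetric in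
`x, y`. A nonzero ideal contains `e`: either `v e = 2 v₁ e` with `v₁ ≠ 0`, or `eₖ v = vₖ e`
with `vₖ ≠ 0`. Finally `e w = w + w₁ e`, so an ideal containing `e` is everything.
In the code `e₁` is `Pi.single 0 1` and `x₁` is `x 0`.
-/

/-- The product of the algebra with basis e₁,…,eₙ and nonzero products
e₁e₁ = 2e₁, e₁e_j = e_j, e_je_j = e₁ (j ≥ 2), written in coordinates. -/
noncomputable def simpleMul (n : ℕ) [NeZero n] (x y : Fin n → ℂ) : Fin n → ℂ :=
  fun i => if i = 0 then (∑ j, x j * y j) + x 0 * y 0 else x 0 * y i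

namespace simpleMul

variable {n : ℕ} [NeZero n]

theorem eq_smul_add_dotProduct_smul (x y : Fin n → ℂ) :
    simpleMul n x y = x 0 • y + (x ⬝ᵥ y) • Pi.single 0 1 := by
  funext i
  by_cases hi : i = 0
  · subst hi
    simp [simpleMul, dotProduct, add_comm]
  · simp [simpleMul, hi]

theorem apply_zero (x y : Fin n → ℂ) : simpleMul n x y 0 = x 0 * y 0 + x ⬝ᵥ y := by
  simp [eq_smul_add_dotProduct_smul]

theorem dotProduct_left (x y z : Fin n → ℂ) :
    simpleMul n x y ⬝ᵥ z = x 0 * (y ⬝ᵥ z) + (x ⬝ᵥ y) * z 0 := by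
  simp [eq_smul_add_dotProduct_smul, add_dotProduct, single_dotProduct]

theorem associator_eq (x y z : Fin n → ℂ) :
    simpleMul n (simpleMul n x y) z - simpleMul n x (simpleMul n y z) =
      (x ⬝ᵥ y) • z + ((x ⬝ᵥ y) * z 0 - y 0 * (x ⬝ᵥ z) - x 0 * (y ⬝ᵥ z)) • Pi.single 0 1 := by
  rw [eq_smul_add_dotProduct_smul (simpleMul n x y) z, apply_zero, dotProduct_left,
    eq_smul_add_dotProduct_smul x (simpleMul n y z),
    dotProduct_comm x (simpleMul n y z), dotProduct_left, eq_smul_add_dotProduct_smul y z,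
    dotProduct_comm z x]
  module

theorem left_symmetric (x y z : Fin n → ℂ) :
    simpleMul n (simpleMul n x y) z - simpleMul n x (simpleMul n y z) =
      simpleMul n (simpleMul n y x) z - simpleMul n y (simpleMul n x z) := by
  rw [associator_eq, associator_eq, dotProduct_comm y x]
  module

theorem single_zero_mul (w : Fin n → ℂ) :
    simpleMul n (Pi.single 0 1) w = w + w 0 • Pi.single 0 1 := by
  simp [eq_smul_add_dotProduct_smul, single_dotProduct]

theorem mul_single_zero (v : Fin n → ℂ) :
    simpleMul n v (Pi.single 0 1) = (2 * v 0) • Pi.single 0 1 := by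
  rw [eq_smul_add_dotProduct_smul, dotProduct_single]
  module

theorem single_mul_of_ne_zero {k : Fin n} (hk : k ≠ 0) (v : Fin n → ℂ) :
    simpleMul n (Pi.single k 1) v = v k • Pi.single 0 1 := by
  simp [eq_smul_add_dotProduct_smul, single_dotProduct, Pi.single_eq_of_ne' hk]

variable {I : Submodule ℂ (Fin n → ℂ)}

theorem single_zero_mem_of_ne_bot (hL : ∀ x y : Fin n → ℂ, x ∈ I → simpleMul n y x ∈ I)
    (hR : ∀ x y : Fin n → ℂ, x ∈ I → simpleMul n x y ∈ I) (hI : I ≠ ⊥) :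
    Pi.single 0 1 ∈ I := by
  obtain ⟨v, hvI, hv⟩ := Submodule.exists_mem_ne_zero_of_ne_bot hI
  by_cases hv0 : v 0 = 0
  · obtain ⟨k, hk⟩ : ∃ k, v k ≠ 0 := Function.ne_iff.mp hv
    have hk0 : k ≠ 0 := by rintro rfl; exact hk hv0
    have := hL v (Pi.single k 1) hvI
    rwa [single_mul_of_ne_zero hk0, I.smul_mem_iff hk] at this
  · have := hR v (Pi.single 0 1) hvI
    rwa [mul_single_zero, I.smul_mem_iff (mul_ne_zero two_ne_zero hv0)] at this

theorem eq_top_of_single_zero_mem (hR : ∀ x y : Fin n → ℂ, x ∈ I → simpleMul n x y ∈ I)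
    (he : Pi.single 0 1 ∈ I) : I = ⊤ := by
  refine Submodule.eq_top_iff'.mpr fun w => ?_
  have := hR _ w he
  rwa [single_zero_mul, I.add_mem_iff_left (I.smul_mem _ he)] at this

end simpleMul

theorem stmt_14_general (n : ℕ) [NeZero n] :
    (∀ x y z : Fin n → ℂ,
      simpleMul n (simpleMul n x y) z - simpleMul n x (simpleMul n y z) =
      simpleMul n (simpleMul n y x) z - simpleMul n y (simpleMul n x z)) ∧
    (∀ I : Submodule ℂ (Fin n → ℂ),
      (∀ x y : Fin n → ℂ, x ∈ I → simpleMul n y x ∈ I) →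
      (∀ x y : Fin n → ℂ, x ∈ I → simpleMul n x y ∈ I) →
      I = ⊥ ∨ I = ⊤) := by
  refine ⟨simpleMul.left_symmetric, fun I hL hR => ?_⟩
  rw [or_iff_not_imp_left]
  exact fun hI =>
    simpleMul.eq_top_of_single_zero_mem hR (simpleMul.single_zero_mem_of_ne_bot hL hR hI)

theorem stmt_14 (n : ℕ) [NeZero n] (hn : 2 ≤ n) :
    (∀ x y z : Fin n → ℂ,
      simpleMul n (simpleMul n x y) z - simpleMul n x (simpleMul n y z) =
      simpleMul n (simpleMul n y x) z - simpleMul n y (simpleMul n x z)) ∧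
    (∀ I : Submodule ℂ (Fin n → ℂ),
      (∀ x y : Fin n → ℂ, x ∈ I → simpleMul n y x ∈ I) →
      (∀ x y : Fin n → ℂ, x ∈ I → simpleMul n x y ∈ I) →
      I = ⊥ ∨ I = ⊤) :=
  stmt_14_general n
end

section
/- The n-dimensional complex algebra with basis e₁,…,eₙ and nonzero products e₁e₁ = e₁ + e₂, e_je₁ = e_j (j = 2,…,n) is bi-symmetric: its associator satisfies both (x,y,z) = (y,x,z) and (x,y,z) = (x,z,y) for all x,y,z, but the algebra is not associative. -/
/-!
Only the second coordinate of a product sees `x 1`, and it enters linearly through `y 0`;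
expanding both bracketings shows that the associator is `x₀ y₀ z₀ e₂`. This expression is
symmetric in `x, y, z`, and it is nonzero at `x = y = z = 1` as soon as `e₂` exists.
-/

/-- The product of the algebra with nonzero products e₁e₁ = e₁ + e₂,
e_je₁ = e_j (j ≥ 2), written in coordinates. -/
def mulA6 (n : ℕ) [NeZero n] (x y : Fin n → ℂ) : Fin n → ℂ :=
  fun i => if i = 0 then x 0 * y 0
    else if i = 1 then x 0 * y 0 + x 1 * y 0
    else x i * y 0

lemma Fin.one_ne_zero_of_two_le {n : ℕ} [NeZero n] (hn : 2 ≤ n) : (1 : Fin n) ≠ 0 := by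
  simp [Fin.ext_iff, Nat.mod_eq_of_lt hn]

theorem mulA6_associator {n : ℕ} [NeZero n] (h10 : (1 : Fin n) ≠ 0) (x y z : Fin n → ℂ) :
    mulA6 n (mulA6 n x y) z - mulA6 n x (mulA6 n y z) = Pi.single 1 (x 0 * y 0 * z 0) := by
  funext i
  by_cases hi : i = 1
  · subst hi
    simp only [mulA6, Pi.sub_apply, Pi.single_eq_same, if_neg h10, if_true]
    ring
  · simp only [mulA6, Pi.sub_apply, Pi.single_eq_of_ne hi, if_neg hi]
    split_ifs <;> ring

theorem stmt_17 (n : ℕ) [NeZero n] (hn : 2 ≤ n) :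
    (∀ x y z : Fin n → ℂ,
      mulA6 n (mulA6 n x y) z - mulA6 n x (mulA6 n y z) =
      mulA6 n (mulA6 n y x) z - mulA6 n y (mulA6 n x z)) ∧
    (∀ x y z : Fin n → ℂ,
      mulA6 n (mulA6 n x y) z - mulA6 n x (mulA6 n y z) =
      mulA6 n (mulA6 n x z) y - mulA6 n x (mulA6 n z y)) ∧
    ¬ (∀ x y z : Fin n → ℂ, mulA6 n (mulA6 n x y) z = mulA6 n x (mulA6 n y z)) := by
  have h10 := Fin.one_ne_zero_of_two_le hn
  simp only [mulA6_associator h10]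
  refine ⟨fun x y z => by rw [mul_comm (x 0)], fun x y z => by rw [mul_right_comm],
    fun hassoc => ?_⟩
  have h111 := mulA6_associator h10 1 1 1
  rw [hassoc, sub_self, eq_comm, Pi.single_eq_zero_iff] at h111
  norm_num at h111
end

section
/- Let G be a Lie algebra over ℂ and R : G → G a linear operator satisfying [R(x),R(y)] = R([R(x),y] + [x,R(y)]) for all x,y. Then the product x*y = [R(x),y] defines a left-symmetric algebra on G. -/
/-! With `x * y = ⁅R x, y⁆`, the operator identity says exactly that `R (x * y - y * x) = ⁅R x, R y⁆`,
so `(x, y, z) - (y, x, z) = ⁅R (x * y - y * x), z⁆ - (⁅R x, ⁅R y, z⁆⁆ - ⁅R y, ⁅R x, z⁆⁆)`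
vanishes by the Jacobi identity. -/

section RotaBaxter

variable {G F : Type*} [LieRing G] [FunLike F G G] [AddMonoidHomClass F G G] {R : F}

theorem lie_apply_apply_eq_apply_sub_apply
    (hR : ∀ x y : G, ⁅R x, R y⁆ = R (⁅R x, y⁆ + ⁅x, R y⁆)) (x y : G) :
    ⁅R x, R y⁆ = R ⁅R x, y⁆ - R ⁅R y, x⁆ := by
  rw [hR x y, map_add, ← lie_skew (R y) x, map_neg, sub_neg_eq_add]

theorem lie_apply_lie_apply_sub_lie_apply_lie_comm
    (hR : ∀ x y : G, ⁅R x, R y⁆ = R (⁅R x, y⁆ + ⁅x, R y⁆)) (x y z : G) :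
    ⁅R ⁅R x, y⁆, z⁆ - ⁅R x, ⁅R y, z⁆⁆ = ⁅R ⁅R y, x⁆, z⁆ - ⁅R y, ⁅R x, z⁆⁆ := by
  have hcomm : ⁅R ⁅R x, y⁆, z⁆ - ⁅R ⁅R y, x⁆, z⁆ = ⁅⁅R x, R y⁆, z⁆ := by
    rw [← sub_lie, ← lie_apply_apply_eq_apply_sub_apply hR]
  have jacobi : ⁅R x, ⁅R y, z⁆⁆ - ⁅R y, ⁅R x, z⁆⁆ = ⁅⁅R x, R y⁆, z⁆ := (lie_lie _ _ _).symm
  rw [sub_eq_sub_iff_sub_eq_sub, hcomm, jacobi]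

end RotaBaxter

theorem stmt_19 (G : Type*) [LieRing G] [LieAlgebra ℂ G]
    (R : G →ₗ[ℂ] G)
    (hR : ∀ x y : G, ⁅R x, R y⁆ = R (⁅R x, y⁆ + ⁅x, R y⁆))
    (mul : G → G → G) (hmul : ∀ x y, mul x y = ⁅R x, y⁆) :
    ∀ x y z : G,
      mul (mul x y) z - mul x (mul y z) = mul (mul y x) z - mul y (mul x z) := by
  intro x y z
  simp only [hmul]
  exact lie_apply_lie_apply_sub_lie_apply_lie_comm hR x y z
end
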